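/- arXiv:1707.04998 — 2 statements merged into one kernel-verified Lean document; each statement's English description precedes it below -/
import Mathlib

section
/- Let X be a non-negative random variable with continuous distribution function F, finite positive mean μ, and quantile function F⁻¹(p) = inf{x ≥ 0 : F(x) ≥ p}. Define the Lorenz curve L(p) = (1/μ) ∫_0^{F⁻¹(p)} t dF(t) for p ∈ (0,1). Then the Gini index G = 1 − 2 ∫_0^1 L(p) dp satisfies G = (2/μ) Cov(X, F(X)). -/
open MeasureTheory ProbabilityTheory
open Set Filter

/-!
Let `ν` be the law of `X` and `F = cdf ν`. Continuity of `F` means that `ν` has no atoms, and for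
`t ≥ 0`, `p < 1` it gives `t < F⁻¹(p) ↔ F t < p`. Hence `μ L(p) = ∫_{F t < p} t dν(t)`, and Fubini
over `p ∈ (0, 1)` turns `μ ∫₀¹ L` into `∫ t (1 - F t) dν = μ - E[X F(X)]`. Finally `E[F(X)] = 1/2`:
it is the `ν ⊗ ν`-mass of `{y ≤ x}`, which by symmetry and the null diagonal is that of the
complement.
-/

theorem nullSingletonClass_of_continuous_cdf {ν : Measure ℝ} [IsProbabilityMeasure ν]
    (h : Continuous (cdf ν)) : NullSingletonClass ν where
  measure_singleton x := by
    rw [← measure_cdf ν, StieltjesFunction.measure_singleton,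
      (h.continuousWithinAt (s := Iic x)).leftLim_eq, sub_self, ENNReal.ofReal_zero]

theorem integral_cdf_self_eq_half (ν : Measure ℝ) [IsProbabilityMeasure ν] [NullSingletonClass ν] :
    ∫ x, cdf ν x ∂ν = 1 / 2 := by
  set s : Set (ℝ × ℝ) := {q | q.2 ≤ q.1}
  have hs : MeasurableSet s := measurableSet_le measurable_snd measurable_fst
  have h_le : (ν.prod ν) s = ∫⁻ x, ν (Iic x) ∂ν := Measure.prod_apply hs
  have h_lt : (ν.prod ν) {q | q.2 < q.1} = ∫⁻ x, ν (Iio x) ∂ν :=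
    Measure.prod_apply (measurableSet_lt measurable_snd measurable_fst)
  have h_swap : (ν.prod ν) sᶜ = (ν.prod ν) {q | q.2 < q.1} := by
    conv_rhs => rw [← Measure.prod_swap]
    rw [Measure.map_apply measurable_swap (measurableSet_lt measurable_snd measurable_fst)]
    congr 1; ext q; simp [s]
  have h_symm : (ν.prod ν) sᶜ = (ν.prod ν) s := by
    rw [h_swap, h_lt, h_le]
    exact lintegral_congr fun x ↦ measure_congr Iio_ae_eq_Iic
  have h_half : (ν.prod ν) s + (ν.prod ν) s = 1 := by
    rw [← measure_univ (μ := ν.prod ν), ← measure_add_measure_compl hs, h_symm]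
  have h_int : ∫ x, cdf ν x ∂ν = ((ν.prod ν) s).toReal := by
    rw [h_le, ← integral_toReal (f := fun x ↦ ν (Iic x))
      (measurable_measure_prodMk_left hs).aemeasurable (.of_forall fun _ ↦ measure_lt_top _ _)]
    exact integral_congr_ae (.of_forall fun x ↦ cdf_eq_real ν x)
  have := congrArg ENNReal.toReal h_half
  rw [ENNReal.toReal_add (measure_ne_top _ _) (measure_ne_top _ _), ENNReal.toReal_one] at this
  linarith

noncomputable def nonnegQuantile (F : ℝ → ℝ) (p : ℝ) : ℝ := sInf {x : ℝ | 0 ≤ x ∧ p ≤ F x}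

theorem nonnegQuantile_le_iff {F : ℝ → ℝ} (hF_mono : Monotone F) (hF_cont : Continuous F)
    {p t : ℝ} (hp : ∃ x, 0 ≤ x ∧ p ≤ F x) (ht : 0 ≤ t) :
    nonnegQuantile F p ≤ t ↔ p ≤ F t := by
  set S := {x : ℝ | 0 ≤ x ∧ p ≤ F x}
  have hS_closed : IsClosed S :=
    (isClosed_le continuous_const continuous_id).inter (isClosed_le continuous_const hF_cont)
  have hS_bdd : BddBelow S := ⟨0, fun _ hx ↦ hx.1⟩
  refine ⟨fun h ↦ ?_, fun h ↦ csInf_le hS_bdd ⟨ht, h⟩⟩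
  exact (hS_closed.csInf_mem hp hS_bdd).2.trans (hF_mono h)

theorem exists_nonneg_le_cdf (ν : Measure ℝ) {p : ℝ} (hp : p < 1) :
    ∃ x, 0 ≤ x ∧ p ≤ cdf ν x :=
  ((eventually_ge_atTop 0).and ((tendsto_cdf_atTop ν).eventually (eventually_ge_nhds hp))).exists

theorem setIntegral_Ioo_zero_one_setIntegral_lt {α : Type*} [MeasurableSpace α] {ν : Measure α}
    [SFinite ν] {F g : α → ℝ} (hF : Measurable F) (hF_mem : ∀ t, F t ∈ Icc 0 1)
    (hg : Integrable g ν) :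
    ∫ p in Ioo 0 1, ∫ t in {t | F t < p}, g t ∂ν = ∫ t, (1 - F t) * g t ∂ν := by
  set E : Set (ℝ × α) := {q | F q.2 < q.1}
  have hE : MeasurableSet E := measurableSet_lt (hF.comp measurable_snd) measurable_fst
  have h_section : ∀ p, ∫ t in {t | F t < p}, g t ∂ν = ∫ t, E.indicator (fun q ↦ g q.2) (p, t) ∂ν :=
    fun p ↦ (integral_indicator (s := {t | F t < p}) (measurableSet_lt hF measurable_const)).symm
  have h_length : ∀ t, ∫ p in Ioo 0 1, E.indicator (fun q ↦ g q.2) (p, t) = (1 - F t) * g t := by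
    intro t
    change ∫ p in Ioo 0 1, (Ioi (F t)).indicator (fun _ ↦ g t) p = _
    rw [integral_indicator_const _ measurableSet_Ioi, measureReal_restrict_apply measurableSet_Ioi,
      Ioi_inter_Ioo, max_eq_left (hF_mem t).1, Real.volume_real_Ioo_of_le (hF_mem t).2, smul_eq_mul]
  simp_rw [h_section]
  rw [integral_integral_swap (f := fun p t ↦ E.indicator (fun q ↦ g q.2) (p, t))
    ((hg.comp_snd _).indicator hE)]
  exact integral_congr_ae (.of_forall h_length)

theorem integral_setIntegral_Iic_nonnegQuantile_cdf {ν : Measure ℝ} [IsProbabilityMeasure ν]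
    (hcont : Continuous (cdf ν)) (h_nonneg : ∀ᵐ t ∂ν, 0 ≤ t) (hint : Integrable id ν) :
    ∫ p in (0 : ℝ)..1, ∫ t in Iic (nonnegQuantile (cdf ν) p), t ∂ν
      = ∫ t, (1 - cdf ν t) * t ∂ν := by
  have := nullSingletonClass_of_continuous_cdf hcont
  have h_section : ∀ p ∈ Ioo (0 : ℝ) 1,
      ∫ t in Iic (nonnegQuantile (cdf ν) p), t ∂ν = ∫ t in {t | cdf ν t < p}, t ∂ν := by
    intro p hp
    rw [integral_Iic_eq_integral_Iio]
    refine setIntegral_congr_set ?_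
    filter_upwards [h_nonneg] with t ht
    change (t < _) = (cdf ν t < p)
    rw [← not_le, ← not_le,
      nonnegQuantile_le_iff (cdf ν).mono hcont (exists_nonneg_le_cdf ν hp.2) ht]
  rw [intervalIntegral.integral_of_le zero_le_one, integral_Ioc_eq_integral_Ioo,
    setIntegral_congr_fun measurableSet_Ioo h_section]
  exact setIntegral_Ioo_zero_one_setIntegral_lt (cdf ν).mono.measurable
    (fun t ↦ ⟨cdf_nonneg ν t, cdf_le_one ν t⟩) hint

/-- For a non-negative random variable `X` with continuous distribution
function `F` and finite positive mean `μ`, the Gini index, defined as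
`G = 1 − 2∫₀¹ L(p) dp` where `L` is the Lorenz curve
`L(p) = (1/μ) ∫_0^{F⁻¹(p)} t dF(t)`, satisfies `G = (2/μ) Cov(X, F(X))`. -/
theorem gini_eq_two_cov_div_mean {Ω : Type*} [MeasurableSpace Ω] (P : Measure Ω)
    [IsProbabilityMeasure P] (X : Ω → ℝ) (hm : Measurable X)
    (hpos : ∀ ω, 0 ≤ X ω) (hint : Integrable X P)
    (μ : ℝ) (hμ : μ = ∫ ω, X ω ∂P) (hμpos : 0 < μ)
    (F : ℝ → ℝ) (hF : ∀ x, F x = (P.map X (Set.Iic x)).toReal)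
    (hFcont : Continuous F)
    (Finv : ℝ → ℝ) (hFinv : ∀ p, Finv p = sInf {x : ℝ | 0 ≤ x ∧ p ≤ F x})
    (L : ℝ → ℝ) (hL : ∀ p, L p = (1 / μ) * ∫ t in Set.Iic (Finv p), t ∂(P.map X))
    (G : ℝ) (hG : G = 1 - 2 * ∫ p in (0:ℝ)..1, L p) :
    G = (2 / μ) * ((∫ ω, X ω * F (X ω) ∂P) - μ * (∫ ω, F (X ω) ∂P)) := by
  have hX : AEMeasurable X P := hm.aemeasurable
  have := Measure.isProbabilityMeasure_map (μ := P) hX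
  have hF_cdf : F = cdf (P.map X) := funext fun x ↦ by rw [hF, cdf_eq_real]; rfl
  have hFinv_eq : Finv = nonnegQuantile F := funext hFinv
  have hF_meas : Measurable F := hFcont.measurable
  have h_lorenz : ∫ p in (0 : ℝ)..1, L p = (1 / μ) * ∫ ω, (1 - F (X ω)) * X ω ∂P := by
    simp_rw [hL, hFinv_eq, hF_cdf]
    rw [intervalIntegral.integral_const_mul, integral_setIntegral_Iic_nonnegQuantile_cdf
      (hF_cdf ▸ hFcont) ((ae_map_iff hX measurableSet_Ici).2 (.of_forall hpos))
      ((integrable_map_measure aestronglyMeasurable_id hX).2 hint),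
      integral_map hX (f := fun t ↦ (1 - cdf (P.map X) t) * t)
        (((cdf _).mono.measurable.const_sub 1).mul measurable_id).aestronglyMeasurable]
  have h_split : ∫ ω, (1 - F (X ω)) * X ω ∂P = μ - ∫ ω, X ω * F (X ω) ∂P := by
    have hF_bdd : ∀ x, ‖F x‖ ≤ 1 := fun x ↦ by
      rw [hF_cdf, Real.norm_of_nonneg (cdf_nonneg _ x)]; exact cdf_le_one _ x
    have hXF : Integrable (fun ω ↦ X ω * F (X ω)) P := hint.mul_bdd (c := 1)
      (hF_meas.comp hm).aestronglyMeasurable (.of_forall fun ω ↦ hF_bdd (X ω))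
    rw [hμ, ← integral_sub hint hXF]
    exact integral_congr_ae (.of_forall fun ω ↦ by ring)
  have h_half : ∫ ω, F (X ω) ∂P = 1 / 2 := by
    rw [← integral_map hX hF_meas.aestronglyMeasurable, hF_cdf]
    have := nullSingletonClass_of_continuous_cdf (hF_cdf ▸ hFcont)
    exact integral_cdf_self_eq_half _
  have hμ_ne : μ ≠ 0 := hμpos.ne'
  rw [hG, h_lorenz, h_split, h_half]
  field_simp
  ring
end

section
/- Let X1, X2, …, Xν be independent and identically distributed non-negative random variables with continuous distribution function F, survival function F̄ = 1 − F, and finite mean μ, where ν ≥ 2 is an integer. Then the absolute S-Gini index S_ν = −ν Cov(X1, F̄(X1)^{ν−1}) satisfies S_ν = μ − E[min(X1, X2, …, Xν)]. -/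
open MeasureTheory ProbabilityTheory Set Filter

/-!
Write `G = 1 - F` for the survival function. Since `F` is continuous, `F (X₁)` is uniform on
`[0, 1]` (probability integral transform), hence `E[G(X₁)^(ν-1)] = 1/ν` and
`E[G(X₁)^(ν-1); X₁ > t] = G(t)^ν / ν`. The layer-cake formula, applied to `X₁` weighted by
`G(X₁)^(ν-1)`, turns the latter into `ν E[X₁ G(X₁)^(ν-1)] = ∫₀^∞ G(t)^ν dt`; applied to the
minimum, whose survival function is `G^ν` by independence, it gives `E[min] = ∫₀^∞ G(t)^ν dt`.
-/

lemma Monotone.exists_preimage_Iic_eq_Iic {F : ℝ → ℝ} (hmono : Monotone F) (hcont : Continuous F)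
    {u : ℝ} (hne : (F ⁻¹' Iic u).Nonempty) (hbdd : BddAbove (F ⁻¹' Iic u)) :
    ∃ b, F b = u ∧ F ⁻¹' Iic u = Iic b := by
  have hclosed : IsClosed (F ⁻¹' Iic u) := isClosed_Iic.preimage hcont
  have hlower : IsLowerSet (F ⁻¹' Iic u) := fun x y hyx hx => (hmono hyx).trans hx
  have hS : F ⁻¹' Iic u = Iic (sSup (F ⁻¹' Iic u)) := by
    rw [← lowerClosure_eq_Iic_csSup hne hbdd hclosed, hlower.lowerClosure]
  set b := sSup (F ⁻¹' Iic u)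
  refine ⟨b, le_antisymm (hS.ge (le_refl b)) ?_, hS⟩
  refine _root_.ge_of_tendsto (hcont.continuousWithinAt (s := Ioi b) (x := b)) ?_
  filter_upwards [self_mem_nhdsWithin] with y hy
  by_contra! hlt
  exact (hS.le hlt.le : y ≤ b).not_gt (mem_Ioi.mp hy)

lemma MeasureTheory.Integrable.integral_mul_eq_integral_setIntegral_lt {α : Type*}
    [MeasurableSpace α] {μ : Measure α} [SFinite μ] {f w : α → ℝ} {C : ℝ} (hf : Integrable f μ)
    (hf_nn : 0 ≤ᵐ[μ] f) (hw : Measurable w) (hw_nn : ∀ x, 0 ≤ w x) (hwC : ∀ x, w x ≤ C) :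
    ∫ x, f x * w x ∂μ = ∫ t in Ioi 0, ∫ x in {x | t < f x}, w x ∂μ := by
  set ν := μ.withDensity fun x => ENNReal.ofReal (w x)
  have hdens : Measurable fun x => ENNReal.ofReal (w x) := hw.ennreal_ofReal
  have hfν : Integrable f ν := by
    refine (integrable_withDensity_iff_integrable_smul' hdens
      (ae_of_all _ fun _ => ENNReal.ofReal_lt_top)).mpr ?_
    refine hf.bdd_mul (c := C) hdens.ennreal_toReal.aestronglyMeasurable (ae_of_all _ fun x => ?_)
    rw [ENNReal.toReal_ofReal (hw_nn x), Real.norm_of_nonneg (hw_nn x)]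
    exact hwC x
  calc ∫ x, f x * w x ∂μ = ∫ x, f x ∂ν := by
        rw [integral_withDensity_eq_integral_toReal_smul hdens
          (ae_of_all _ fun _ => ENNReal.ofReal_lt_top)]
        simp only [ENNReal.toReal_ofReal (hw_nn _), smul_eq_mul, mul_comm]
    _ = ∫ t in Ioi 0, ν.real {x | t < f x} :=
        hfν.integral_eq_integral_meas_lt ((withDensity_absolutelyContinuous μ _).ae_le hf_nn)
    _ = ∫ t in Ioi 0, ∫ x in {x | t < f x}, w x ∂μ := by
        congr 1 with t
        rw [integral_eq_lintegral_of_nonneg_ae (ae_of_all _ hw_nn) hw.aestronglyMeasurable,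
          measureReal_def, withDensity_apply']

namespace ProbabilityTheory

variable {ρ : Measure ℝ} [IsProbabilityMeasure ρ]

lemma measure_cdf_preimage_Iic (hF : Continuous (cdf ρ)) {u : ℝ} (hu0 : 0 ≤ u) (hu1 : u < 1) :
    ρ (cdf ρ ⁻¹' Iic u) = ENNReal.ofReal u := by
  obtain ⟨x₁, hx₁⟩ := ((tendsto_cdf_atTop ρ).eventually (lt_mem_nhds hu1)).exists_forall_of_atTop
  have hbdd : BddAbove (cdf ρ ⁻¹' Iic u) :=
    ⟨x₁, fun x hx => le_of_not_gt fun h => (hx₁ x h.le).not_ge hx⟩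
  rcases (cdf ρ ⁻¹' Iic u).eq_empty_or_nonempty with hempty | hne
  · obtain rfl : u = 0 := by
      refine le_antisymm (le_of_not_gt fun hu => ?_) hu0
      obtain ⟨x, hx⟩ := ((tendsto_cdf_atBot ρ).eventually (gt_mem_nhds hu)).exists
      exact hempty.subset (show x ∈ cdf ρ ⁻¹' Iic u from hx.le)
    simp [hempty]
  · obtain ⟨b, hb, hS⟩ := (monotone_cdf ρ).exists_preimage_Iic_eq_Iic hF hne hbdd
    rw [hS, ← ofReal_cdf, hb]

theorem map_cdf_eq_volume_restrict_Icc (hF : Continuous (cdf ρ)) :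
    ρ.map (cdf ρ) = volume.restrict (Icc 0 1) := by
  refine Measure.ext_of_Iic _ _ fun u => ?_
  rw [Measure.map_apply hF.measurable measurableSet_Iic, Measure.restrict_apply measurableSet_Iic]
  rcases lt_or_ge u 0 with hu0 | hu0
  · have : cdf ρ ⁻¹' Iic u = ∅ :=
      eq_empty_of_forall_notMem fun x hx => (hu0.trans_le (cdf_nonneg ρ x)).not_ge hx
    have h' : Iic u ∩ Icc (0 : ℝ) 1 = ∅ :=
      eq_empty_of_forall_notMem fun x hx => (hu0.trans_le hx.2.1).not_ge hx.1
    simp [this, h']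
  rcases lt_or_ge u 1 with hu1 | hu1
  · have h' : Iic u ∩ Icc (0 : ℝ) 1 = Icc 0 u :=
      Set.ext fun x => ⟨fun h => ⟨h.2.1, h.1⟩, fun h => ⟨h.2, h.1, h.2.trans hu1.le⟩⟩
    rw [measure_cdf_preimage_Iic hF hu0 hu1, h', Real.volume_Icc, sub_zero]
  · have : cdf ρ ⁻¹' Iic u = univ := eq_univ_of_forall fun x => (cdf_le_one ρ x).trans hu1
    simp [this, inter_eq_right.mpr (Icc_subset_Iic_self.trans (Iic_subset_Iic.mpr hu1))]

lemma ae_cdf_ne (hF : Continuous (cdf ρ)) (c : ℝ) : ∀ᵐ x ∂ρ, cdf ρ x ≠ c := by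
  refine ae_of_ae_map (p := (· ≠ c)) hF.aemeasurable ?_
  rw [map_cdf_eq_volume_restrict_Icc hF]
  exact ae_restrict_of_ae (measure_eq_zero_iff_ae_notMem.mp (measure_singleton c))

lemma integral_one_sub_cdf_pow (hF : Continuous (cdf ρ)) (n : ℕ) :
    ∫ x, (1 - cdf ρ x) ^ n ∂ρ = 1 / (n + 1) := by
  rw [← integral_map (f := fun u => (1 - u) ^ n) hF.aemeasurable (by fun_prop),
    map_cdf_eq_volume_restrict_Icc hF, integral_Icc_eq_integral_Ioc,
    ← intervalIntegral.integral_of_le zero_le_one,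
    intervalIntegral.integral_comp_sub_left (fun u => u ^ n)]
  simp

lemma setIntegral_Ioi_one_sub_cdf_pow (hF : Continuous (cdf ρ)) (n : ℕ) (t : ℝ) :
    ∫ x in Ioi t, (1 - cdf ρ x) ^ n ∂ρ = (1 - cdf ρ t) ^ (n + 1) / (n + 1) := by
  have hae : Ioi t =ᵐ[ρ] cdf ρ ⁻¹' Ioi (cdf ρ t) := by
    refine eventuallyEq_set.mpr ((ae_cdf_ne hF (cdf ρ t)).mono fun x hx => ?_)
    exact ⟨fun hxt => lt_of_le_of_ne (monotone_cdf ρ (le_of_lt hxt)) hx.symm,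
      fun h => lt_of_not_ge fun hxt => h.not_ge (monotone_cdf ρ hxt)⟩
  have hIoc : Ioi (cdf ρ t) ∩ Icc 0 1 = Ioc (cdf ρ t) 1 :=
    Set.ext fun u => ⟨fun h => ⟨h.1, h.2.2⟩,
      fun h => ⟨h.1, (cdf_nonneg ρ t).trans h.1.le, h.2⟩⟩
  rw [setIntegral_congr_set hae,
    ← setIntegral_map (f := fun u => (1 - u) ^ n) measurableSet_Ioi (by fun_prop) hF.aemeasurable,
    map_cdf_eq_volume_restrict_Icc hF, Measure.restrict_restrict measurableSet_Ioi, hIoc,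
    ← intervalIntegral.integral_of_le (cdf_le_one ρ t),
    intervalIntegral.integral_comp_sub_left (fun u => u ^ n)]
  simp

lemma integral_mul_one_sub_cdf_pow (hF : Continuous (cdf ρ)) (hint : Integrable (fun x => x) ρ)
    (hnn : ∀ᵐ x ∂ρ, 0 ≤ x) (n : ℕ) :
    ∫ x, x * (1 - cdf ρ x) ^ n ∂ρ = (∫ t in Ioi 0, (1 - cdf ρ t) ^ (n + 1)) / (n + 1) := by
  rw [hint.integral_mul_eq_integral_setIntegral_lt hnn (by fun_prop)
    (fun x => pow_nonneg (sub_nonneg.mpr (cdf_le_one ρ x)) n)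
    (fun x => pow_le_one₀ (sub_nonneg.mpr (cdf_le_one ρ x)) (by linarith [cdf_nonneg ρ x])),
    ← integral_div]
  exact integral_congr_ae (ae_of_all _ fun t => setIntegral_Ioi_one_sub_cdf_pow hF n t)

lemma one_sub_cdf_eq_measureReal_Ioi (t : ℝ) : 1 - cdf ρ t = ρ.real (Ioi t) := by
  rw [← compl_Iic, probReal_compl_eq_one_sub measurableSet_Iic, cdf_eq_real]

variable {Ω ι : Type*} [MeasurableSpace Ω] {P : Measure Ω} [Fintype ι] [Nonempty ι]
  {X : ι → Ω → ℝ}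

lemma iIndepFun.measure_lt_iInf (hindep : iIndepFun X P) (t : ℝ) :
    P {ω | t < ⨅ i, X i ω} = ∏ i, P (X i ⁻¹' Ioi t) := by
  have hset : {ω | t < ⨅ i, X i ω} = ⋂ i, X i ⁻¹' Ioi t := by
    ext ω
    obtain ⟨j, hj⟩ := exists_eq_ciInf_of_finite (f := fun i => X i ω)
    simp only [mem_ofPred_eq, mem_iInter, mem_preimage, mem_Ioi]
    exact ⟨fun h i => h.trans_le (ciInf_le (finite_range _).bddBelow i), fun h => hj ▸ h j⟩
  rw [hset, hindep.meas_iInter fun i => ⟨Ioi t, measurableSet_Ioi, rfl⟩]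

lemma integral_iInf_eq_setIntegral_one_sub_cdf_pow [IsProbabilityMeasure P] (i₀ : ι)
    (hid : ∀ i, IdentDistrib (X i) (X i₀) P P) (hindep : iIndepFun X P)
    (hint : Integrable (X i₀) P) (hnn : ∀ i, 0 ≤ᵐ[P] X i) :
    ∫ ω, ⨅ i, X i ω ∂P = ∫ t in Ioi 0, (1 - cdf (P.map (X i₀)) t) ^ Fintype.card ι := by
  have hmin_nn : 0 ≤ᵐ[P] fun ω => ⨅ i, X i ω := by
    filter_upwards [ae_all_iff.mpr hnn] with ω hω using le_ciInf hω
  have hmin_int : Integrable (fun ω => ⨅ i, X i ω) P := by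
    refine hint.mono (AEMeasurable.iInf fun i => (hid i).aemeasurable_fst).aestronglyMeasurable ?_
    filter_upwards [hmin_nn, hnn i₀] with ω hmin hi₀
    rw [Real.norm_of_nonneg hmin, Real.norm_of_nonneg hi₀]
    exact ciInf_le (finite_range _).bddBelow i₀
  have htail : ∀ i t, P (X i ⁻¹' Ioi t) = P.map (X i₀) (Ioi t) := fun i t => by
    rw [(hid i).measure_mem_eq measurableSet_Ioi,
      Measure.map_apply_of_aemeasurable (hid i).aemeasurable_snd measurableSet_Ioi]
  have : IsProbabilityMeasure (P.map (X i₀)) :=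
    Measure.isProbabilityMeasure_map (hid i₀).aemeasurable_snd
  rw [hmin_int.integral_eq_integral_meas_lt hmin_nn]
  refine integral_congr_ae (ae_of_all _ fun t => ?_)
  dsimp only
  rw [measureReal_def, hindep.measure_lt_iInf, Finset.prod_congr rfl fun i _ => htail i t,
    Finset.prod_const, Finset.card_univ, ENNReal.toReal_pow, one_sub_cdf_eq_measureReal_Ioi,
    measureReal_def]

end ProbabilityTheory

/-- For `X₁, …, X_ν` i.i.d. non-negative random variables with continuous
distribution function `F`, survival function `F̄ = 1 − F` and finite mean `μ`, the absolute
S-Gini index `S_ν = −ν Cov(X₁, F̄(X₁)^{ν−1})` satisfies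
`S_ν = μ − E[min(X₁, …, X_ν)]`. -/
theorem absolute_sgini_eq_mean_sub_expected_min {Ω : Type*} [MeasurableSpace Ω]
    (P : Measure Ω) [IsProbabilityMeasure P] (ν : ℕ) (hν : 2 ≤ ν)
    (X : Fin ν → Ω → ℝ)
    (hpos : ∀ i ω, 0 ≤ X i ω)
    (hid : ∀ i, IdentDistrib (X i) (X ⟨0, by omega⟩) P P)
    (hindep : iIndepFun X P)
    (hint : Integrable (X ⟨0, by omega⟩) P)
    (μ : ℝ) (hμ : μ = ∫ ω, X ⟨0, by omega⟩ ω ∂P)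
    (F : ℝ → ℝ) (hF : ∀ x, F x = (P.map (X ⟨0, by omega⟩) (Set.Iic x)).toReal)
    (hFcont : Continuous F) :
    -(ν : ℝ) * ((∫ ω, X ⟨0, by omega⟩ ω * (1 - F (X ⟨0, by omega⟩ ω)) ^ (ν - 1) ∂P) -
        μ * (∫ ω, (1 - F (X ⟨0, by omega⟩ ω)) ^ (ν - 1) ∂P)) =
      μ - ∫ ω, (⨅ i, X i ω) ∂P := by
  set X₀ := X ⟨0, by omega⟩
  have hX₀ : AEMeasurable X₀ P := (hid ⟨0, by omega⟩).aemeasurable_snd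
  set ρ := P.map X₀
  have : IsProbabilityMeasure ρ := Measure.isProbabilityMeasure_map hX₀
  obtain rfl : F = cdf ρ := funext fun x => by rw [hF, cdf_eq_real]; rfl
  have hν₁ : ((ν - 1 : ℕ) : ℝ) + 1 = ν := by norm_cast; omega
  have hmoment : ∫ ω, (1 - cdf ρ (X₀ ω)) ^ (ν - 1) ∂P = 1 / ν := by
    rw [← integral_map (f := fun x => (1 - cdf ρ x) ^ (ν - 1)) hX₀ (by fun_prop),
      integral_one_sub_cdf_pow hFcont, hν₁]
  have hcross : ∫ ω, X₀ ω * (1 - cdf ρ (X₀ ω)) ^ (ν - 1) ∂P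
      = (∫ t in Ioi 0, (1 - cdf ρ t) ^ ν) / ν := by
    rw [← integral_map (f := fun x => x * (1 - cdf ρ x) ^ (ν - 1)) hX₀ (by fun_prop),
      integral_mul_one_sub_cdf_pow hFcont
        ((integrable_map_measure aestronglyMeasurable_id hX₀).mpr hint)
        ((ae_map_iff hX₀ measurableSet_Ici).mpr (ae_of_all _ (hpos _))),
      hν₁, Nat.sub_add_cancel (by omega)]
  have : Nonempty (Fin ν) := ⟨⟨0, by omega⟩⟩
  have hmin : ∫ ω, ⨅ i, X i ω ∂P = ∫ t in Ioi 0, (1 - cdf ρ t) ^ ν := by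
    simpa using integral_iInf_eq_setIntegral_one_sub_cdf_pow _ hid hindep hint
      fun i => ae_of_all _ (hpos i)
  rw [hmoment, hcross, hmin, hμ]
  field_simp
  ring
end
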